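/- Critical remainder R₀ vanishes with the n^{-1} normalization: under the assumptions of the critical CLT ((F), (H3) with α = 1/√2, and 𝔣 = (f_ℓ) satisfying (H3) uniformly), for any nondecreasing sequence (p_n) of positive integers with p_n < n, p_n/n → 1 and n − p_n − λ log n → ∞ for all λ > 0, the quantity R₀(n) = |𝔾_n|^{-1/2} ∑_{k=0}^{n-p_n-1} M_{𝔾_k}(f̃_{n-k}) satisfies lim_{n→∞} n^{-1} E[R₀(n)²] = 0. -/

import Mathlib

open MeasureTheory ProbabilityTheory Filter Finset
open scoped NNReal Topology

noncomputable section

namespace BMC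

variable {S : Type*} [MeasurableSpace S] {Ω : Type*} [MeasurableSpace Ω]

/-- The `n`-th generation `𝔾_n` of the binary tree, as a finset of `List Bool`. -/
def gen (n : ℕ) : Finset (List Bool) :=
  (Finset.univ : Finset (Fin n → Bool)).image List.ofFn

/-- The tree `𝕋_n` up to generation `n`. -/
def treeUpTo (n : ℕ) : Finset (List Bool) :=
  (Finset.range (n + 1)).biUnion gen

/-- The descendants `i𝔾_m` of `i` that are `m` generations below `i`. -/
def desc (i : List Bool) (m : ℕ) : Finset (List Bool) :=
  (gen m).image fun j => i ++ j

/-- `M_A(f) = ∑_{i ∈ A} f(X_i)`. -/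
def MA (X : List Bool → Ω → S) (A : Finset (List Bool)) (f : S → ℝ) (ω : Ω) : ℝ :=
  ∑ i ∈ A, f (X i ω)

/-- Complex-valued version of `M_A(f)`. -/
def MAC (X : List Bool → Ω → S) (A : Finset (List Bool)) (f : S → ℂ) (ω : Ω) : ℂ :=
  ∑ i ∈ A, f (X i ω)

/-- `𝒫(f ⊗ g)(x) = ∫ f(y) g(z) 𝒫(x, dy, dz)`. -/
def Ptens (P : Kernel S (S × S)) (f g : S → ℝ) (x : S) : ℝ :=
  ∫ p, f p.1 * g p.2 ∂(P x)

/-- `𝒫(f ⊗_sym g)(x) = ∫ (f(y) g(z) + g(y) f(z))/2 𝒫(x, dy, dz)`. -/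
def PtensSym (P : Kernel S (S × S)) (f g : S → ℝ) (x : S) : ℝ :=
  ∫ p, (f p.1 * g p.2 + g p.1 * f p.2) / 2 ∂(P x)

/-- Complex version of `𝒫(f ⊗_sym g)`. -/
def PtensSymC (P : Kernel S (S × S)) (f g : S → ℂ) (x : S) : ℂ :=
  ∫ p, (f p.1 * g p.2 + g p.1 * f p.2) / 2 ∂(P x)

/-- The operator `𝒬 f (x) = ∫ (f(y)+f(z))/2 𝒫(x, dy, dz)`, i.e. the action of the
Markov kernel `𝒬 = (P₀ + P₁)/2` on functions. -/
def Qop (P : Kernel S (S × S)) (f : S → ℝ) (x : S) : ℝ :=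
  ∫ p, (f p.1 + f p.2) / 2 ∂(P x)

/-- The iterated operator `𝒬ⁿ`. -/
def Qiter (P : Kernel S (S × S)) (n : ℕ) (f : S → ℝ) : S → ℝ := (Qop P)^[n] f

/-- Complex version of `𝒬`. -/
def QopC (P : Kernel S (S × S)) (f : S → ℂ) (x : S) : ℂ :=
  ∫ p, (f p.1 + f p.2) / 2 ∂(P x)

/-- Complex version of `𝒬ⁿ`. -/
def QiterC (P : Kernel S (S × S)) (n : ℕ) (f : S → ℂ) : S → ℂ := (QopC P)^[n] f

/-- `⟨μ, f⟩ = ∫ f dμ`. -/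
def mInt (μ : Measure S) (f : S → ℝ) : ℝ := ∫ x, f x ∂μ

/-- Complex `⟨μ, f⟩`. -/
def mIntC (μ : Measure S) (f : S → ℂ) : ℂ := ∫ x, f x ∂μ

/-- `f̃ = f - ⟨μ, f⟩`. -/
def ctr (μ : Measure S) (f : S → ℝ) (x : S) : ℝ := f x - mInt μ f

/-- Coercion of a real function to a complex one. -/
def cf (f : S → ℝ) : S → ℂ := fun x => (f x : ℂ)

/-- The σ-field `ℋ_n = σ(X_j, j ∈ 𝕋_n)`. -/
def sigmaTree (X : List Bool → Ω → S) (n : ℕ) : MeasurableSpace Ω :=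
  ⨆ j ∈ treeUpTo n, MeasurableSpace.comap (X j) inferInstance

lemma treeUpTo_mono {a b : ℕ} (h : a ≤ b) : treeUpTo a ⊆ treeUpTo b := by
  intro i hi
  simp only [treeUpTo, Finset.mem_biUnion, Finset.mem_range] at hi ⊢
  obtain ⟨r, hr, hir⟩ := hi
  exact ⟨r, lt_of_lt_of_le hr (by omega), hir⟩

/-- The filtration `(ℋ_n = σ(X_i, i ∈ 𝕋_n))_{n ∈ ℕ}`. -/
def natFiltration (X : List Bool → Ω → S) (hX : ∀ i, Measurable (X i)) :
    Filtration ℕ (inferInstance : MeasurableSpace Ω) where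
  seq n := sigmaTree X n
  mono' := by
    intro a b hab
    exact biSup_mono fun j hj => treeUpTo_mono hab hj
  le' n := by
    refine iSup₂_le fun j _ => ?_
    exact (hX j).comap_le

/-- `X = (X_i, i ∈ 𝕋)` is a bifurcating Markov chain on `(S, 𝒮)` with initial
distribution `ν` and probability kernel `𝒫`, under the probability measure `m` on `Ω`. -/
structure IsBMC (P : Kernel S (S × S)) (ν : Measure S) (m : Measure Ω)
    (X : List Bool → Ω → S) : Prop where
  meas : ∀ i, Measurable (X i)
  init : m.map (X []) = ν
  branching : ∀ (n : ℕ) (g : List Bool → S → S × S → ℝ),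
    (∀ i, Measurable fun q : S × S × S => g i q.1 q.2) →
    (∀ i, ∃ C, ∀ x p, |g i x p| ≤ C) →
    (m[fun ω => ∏ i ∈ gen n, g i (X i ω) (X (i ++ [false]) ω, X (i ++ [true]) ω)
        | sigmaTree X n]
      =ᵐ[m] fun ω => ∏ i ∈ gen n, ∫ p, g i (X i ω) p ∂(P (X i ω)))

/-- Structural Assumption (F) on the set of functions `F`. -/
structure AssumpF (P : Kernel S (S × S)) (ν : Measure S) (F : Set (S → ℝ)) : Prop where
  meas : ∀ f ∈ F, Measurable f
  add_mem : ∀ f ∈ F, ∀ g ∈ F, f + g ∈ F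
  smul_mem : ∀ (c : ℝ), ∀ f ∈ F, c • f ∈ F
  const_mem : ∀ c : ℝ, (fun _ : S => c) ∈ F
  sq_mem : ∀ f ∈ F, (fun x => f x ^ 2) ∈ F
  int_nu : ∀ f ∈ F, Integrable f ν
  tens_int : ∀ f₀ ∈ F, ∀ f₁ ∈ F, ∀ x : S,
    Integrable (fun p : S × S => f₀ p.1 * f₁ p.2) (P x)
  tens_mem : ∀ f₀ ∈ F, ∀ f₁ ∈ F, Ptens P f₀ f₁ ∈ F

/-- Geometric ergodicity Assumption (H2) with rate `α`. -/
structure AssumpH2 (P : Kernel S (S × S)) (F : Set (S → ℝ)) (μ : Measure S) (α : ℝ) :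
    Prop where
  prob : IsProbabilityMeasure μ
  int_mu : ∀ f ∈ F, Integrable f μ
  erg : ∀ f ∈ F, ∃ g ∈ F, ∀ (n : ℕ) (x : S), |Qiter P n f x - mInt μ f| ≤ α ^ n * g x

/-- A sequence `𝔣` satisfies Assumption (H2) uniformly, with dominating function `g`. -/
def UnifH2 (P : Kernel S (S × S)) (μ : Measure S) (α : ℝ) (𝔣 : ℕ → S → ℝ) (g : S → ℝ) :
    Prop :=
  ∀ (n ℓ : ℕ) (x : S), |Qiter P n (𝔣 ℓ) x| ≤ g x ∧
    |Qiter P n (𝔣 ℓ) x - mInt μ (𝔣 ℓ)| ≤ α ^ n * g x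

/-- `N_{n,∅}(𝔣) = |𝔾_n|^{-1/2} ∑_{ℓ=0}^n M_{𝔾_{n-ℓ}}(f̃_ℓ)`. -/
def Nroot (μ : Measure S) (X : List Bool → Ω → S) (𝔣 : ℕ → S → ℝ) (n : ℕ) (ω : Ω) : ℝ :=
  (Real.sqrt (2 ^ n))⁻¹ * ∑ ℓ ∈ Finset.range (n + 1), MA X (gen (n - ℓ)) (ctr μ (𝔣 ℓ)) ω

/-- `N_{n,i}(𝔣) = |𝔾_n|^{-1/2} ∑_{ℓ=0}^{n-|i|} M_{i𝔾_{n-|i|-ℓ}}(f̃_ℓ)`. -/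
def Nni (μ : Measure S) (X : List Bool → Ω → S) (𝔣 : ℕ → S → ℝ) (n : ℕ) (i : List Bool)
    (ω : Ω) : ℝ :=
  (Real.sqrt (2 ^ n))⁻¹ *
    ∑ ℓ ∈ Finset.range (n - i.length + 1), MA X (desc i (n - i.length - ℓ)) (ctr μ (𝔣 ℓ)) ω

/-- Convergence in distribution to a centered Gaussian with variance `v`, expressed by
convergence of integrals of bounded continuous test functions. -/
def TendstoGauss (m : Measure Ω) (Y : ℕ → Ω → ℝ) (v : ℝ≥0) : Prop :=
  ∀ φ : BoundedContinuousFunction ℝ ℝ,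
    Tendsto (fun n => ∫ ω, φ (Y n ω) ∂m) atTop (𝓝 (∫ x, φ x ∂(gaussianReal 0 v)))

/-- Assumption (H3): a second spectral gap, with rate `α`, eigenvalues `(αj j)_{j ∈ J}`
of modulus `α`, projectors `R j`, and speed `β`. -/
structure AssumpH3 (P : Kernel S (S × S)) (F : Set (S → ℝ)) (μ : Measure S) (α : ℝ)
    {J : Type*} [Fintype J] [DecidableEq J] (αj : J → ℂ) (R : J → (S → ℂ) → S → ℂ) (β : ℕ → ℝ) :
    Prop where
  prob : IsProbabilityMeasure μ
  int_mu : ∀ f ∈ F, Integrable f μ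
  nonempty : Nonempty J
  inj : Function.Injective αj
  abs_eq : ∀ j, ‖αj j‖ = α
  Rlin : ∀ (j : J) (c : ℂ) (f g : S → ℂ),
    R j (fun x => c * f x + g x) = fun x => c * R j f x + R j g x
  Rorth : ∀ (j j' : J) (f : S → ℂ), R j (R j' f) = if j = j' then R j f else fun _ => 0
  Rne : ∀ j : J, ∃ f ∈ F, R j (cf f) ≠ fun _ => 0
  Rmeas : ∀ (j : J) (f : S → ℂ), Measurable f → Measurable (R j f)
  Reig : ∀ (j : J) (f : S → ℂ), QopC P (R j f) = fun x => αj j * R j f x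
  βpos : ∀ n, 0 < β n
  βle : ∀ n, β n ≤ 1
  βanti : Antitone β
  βlim : Tendsto β atTop (𝓝 0)
  erg : ∀ f ∈ F, ∃ g ∈ F, ∀ (n : ℕ) (x : S),
    ‖QiterC P n (cf f) x - (mInt μ f : ℂ)
      - (α : ℂ) ^ n * ∑ j, (αj j / (α : ℂ)) ^ n * R j (cf f) x‖ ≤ β n * α ^ n * g x

/-- `f̂ = f̃ - ∑_{j ∈ J} ℛ_j(f)`, as a complex-valued function. -/
def fhat {J : Type*} [Fintype J] (μ : Measure S) (R : J → (S → ℂ) → S → ℂ)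
    (f : S → ℝ) : S → ℂ :=
  fun x => (ctr μ f x : ℂ) - ∑ j, R j (cf f) x

/-- A sequence `𝔣` satisfies Assumption (H3) uniformly, with dominating function `g`. -/
def UnifH3 {J : Type*} [Fintype J] (P : Kernel S (S × S)) (μ : Measure S) (α : ℝ)
    (R : J → (S → ℂ) → S → ℂ) (β : ℕ → ℝ) (𝔣 : ℕ → S → ℝ) (g : S → ℝ) : Prop :=
  ∀ (n ℓ : ℕ) (x : S),
    ‖QiterC P n (cf (𝔣 ℓ)) x‖ ≤ g x ∧
    ‖QiterC P n (cf (ctr μ (𝔣 ℓ))) x‖ ≤ α ^ n * g x ∧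
    ‖QiterC P n (fhat μ R (𝔣 ℓ)) x‖ ≤ β n * α ^ n * g x

/-- `𝒫 f*_{k,ℓ}(x) = ∑_{j ∈ J} θ_j^{ℓ-k} 𝒫(ℛ_j(f_k) ⊗_sym ℛ̄_j(f_ℓ))(x)`, where
`ℛ̄_j(f) = conj (ℛ_j f)` for real `f`. -/
def Pfstar {J : Type*} [Fintype J] (P : Kernel S (S × S)) (α : ℝ) (αj : J → ℂ)
    (R : J → (S → ℂ) → S → ℂ) (𝔣 : ℕ → S → ℝ) (k ℓ : ℕ) (x : S) : ℂ :=
  ∑ j, (αj j / (α : ℂ)) ^ ((ℓ : ℤ) - (k : ℤ)) *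
    PtensSymC P (R j (cf (𝔣 k))) (fun y => starRingEnd ℂ (R j (cf (𝔣 ℓ)) y)) x

/-!
Only crude bounds are needed. Since `|f̃_ℓ| ≤ g`, the Cauchy–Schwarz inequality over the
`q_n = n - p_n` generations and inside each generation gives
`R₀(n)² ≤ 2⁻ⁿ q_n ∑_{k < q_n} 2ᵏ M_{𝔾_k}(g²)`. The many-to-one formula
`E[M_{𝔾_k}(h)] = 2ᵏ ⟨ν, 𝒬ᵏ h⟩` (for bounded `h`, then by monotone convergence for `h = g²`) and the
boundedness of `⟨ν, 𝒬ᵏ g²⟩` under (H3) yield `E[R₀(n)²] ≤ C q_n² 4^{q_n} 2⁻ⁿ`, which is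
exponentially small because `q_n = o(n)`. The projections `ℛ_j(g²)` are `ν`-integrable, as
Lagrange interpolation at the distinct `θ_j` recovers them from the terms
`∑_j θ_jᵗ ℛ_j(g²)`, `t < |J|`, each controlled by (H3).
-/

lemma gen_zero : gen 0 = {[]} := by
  ext i
  simp [gen, List.eq_nil_iff_forall_not_mem]

lemma card_gen (n : ℕ) : #(gen n) = 2 ^ n := by
  rw [gen, card_image_of_injective _ List.ofFn_injective]
  simp

lemma sum_gen_succ {M : Type*} [AddCommMonoid M] (u : List Bool → M) (k : ℕ) :
    ∑ i ∈ gen (k + 1), u i = ∑ i ∈ gen k, (u (i ++ [false]) + u (i ++ [true])) := by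
  have ofFn_snoc : ∀ (i : Fin k → Bool) (b : Bool),
      List.ofFn (Fin.snoc i b : Fin (k + 1) → Bool) = List.ofFn i ++ [b] := fun i b => by
    rw [List.ofFn_succ']; simp [List.concat_eq_append]
  simp only [gen, sum_image fun _ _ _ _ h => List.ofFn_injective h]
  rw [← (Fin.snocEquiv fun _ => Bool).sum_comp, Fintype.sum_prod_type, Fintype.sum_bool,
    ← sum_add_distrib]
  refine sum_congr rfl fun i _ => ?_
  rw [add_comm, ← ofFn_snoc, ← ofFn_snoc]
  rfl

def MeasurableBoundedBy (C : ℝ) (h : S → ℝ) : Prop :=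
  Measurable h ∧ ∀ x, |h x| ≤ C

lemma MeasurableBoundedBy.integrable_comp {C : ℝ} {h : S → ℝ} (hh : MeasurableBoundedBy C h)
    {m : Measure Ω} [IsFiniteMeasure m] {Y : Ω → S} (hY : Measurable Y) :
    Integrable (fun ω => h (Y ω)) m :=
  .of_bound (hh.1.comp hY).aestronglyMeasurable C (ae_of_all _ fun ω => hh.2 (Y ω))

section Qop

variable (P : Kernel S (S × S))

lemma measurable_qop [IsSFiniteKernel P] {h : S → ℝ} (hh : Measurable h) :
    Measurable (Qop P h) :=
  (((hh.comp (measurable_fst.comp measurable_snd)).add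
    (hh.comp (measurable_snd.comp measurable_snd))).div_const 2).stronglyMeasurable
    |>.integral_kernel_prod_right'.measurable

lemma qop_mono {u v : S → ℝ} {x : S}
    (hu : Integrable (fun q : S × S => (u q.1 + u q.2) / 2) (P x))
    (hv : Integrable (fun q : S × S => (v q.1 + v q.2) / 2) (P x))
    (huv : u ≤ v) : Qop P u x ≤ Qop P v x :=
  integral_mono hu hv fun q => by linarith [huv q.1, huv q.2]

lemma qiterC_cf (k : ℕ) (f : S → ℝ) : QiterC P k (cf f) = cf (Qiter P k f) := by
  induction k with
  | zero => rfl
  | succ k ih =>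
    rw [QiterC, Qiter, Function.iterate_succ_apply', Function.iterate_succ_apply', ← QiterC,
      ← Qiter, ih]
    funext x
    simp only [QopC, Qop, cf, ← integral_complex_ofReal]
    push_cast
    rfl

lemma qiter_succ (k : ℕ) (f : S → ℝ) : Qiter P (k + 1) f = Qiter P k (Qop P f) :=
  Function.iterate_succ_apply _ _ _

lemma qiter_succ' (k : ℕ) (f : S → ℝ) : Qiter P (k + 1) f = Qop P (Qiter P k f) :=
  Function.iterate_succ_apply' _ _ _

variable {ν : Measure S} {F : Set (S → ℝ)}

lemma AssumpF.integrable_pair (hF : AssumpF P ν F) {f : S → ℝ} (hf : f ∈ F) (x : S) :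
    Integrable (fun q : S × S => (f q.1 + f q.2) / 2) (P x) := by
  have h₁ := hF.tens_int f hf _ (hF.const_mem 1) x
  have h₂ := hF.tens_int _ (hF.const_mem 1) f hf x
  simp only [mul_one, one_mul] at h₁ h₂
  exact (h₁.add h₂).div_const 2

lemma AssumpF.qop_mem (hF : AssumpF P ν F) {f : S → ℝ} (hf : f ∈ F) : Qop P f ∈ F := by
  have hQ : Qop P f = (2⁻¹ : ℝ) • (Ptens P f (fun _ => 1) + Ptens P (fun _ => 1) f) := by
    funext x
    rw [Pi.smul_apply, Pi.add_apply, Ptens, Ptens, ← integral_add (hF.tens_int f hf _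
      (hF.const_mem 1) x) (hF.tens_int _ (hF.const_mem 1) f hf x), smul_eq_mul,
      ← integral_const_mul, Qop]
    congr 1 with q
    ring
  rw [hQ]
  exact hF.smul_mem _ _ (hF.add_mem _ (hF.tens_mem f hf _ (hF.const_mem 1)) _
    (hF.tens_mem _ (hF.const_mem 1) f hf))

lemma AssumpF.qiter_mem (hF : AssumpF P ν F) {f : S → ℝ} (hf : f ∈ F) (k : ℕ) :
    Qiter P k f ∈ F := by
  induction k with
  | zero => exact hf
  | succ k ih => rw [qiter_succ']; exact hF.qop_mem P ih

variable [IsMarkovKernel P]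

lemma MeasurableBoundedBy.integrable_pair {C : ℝ} {h : S → ℝ} (hh : MeasurableBoundedBy C h)
    (x : S) : Integrable (fun q : S × S => (h q.1 + h q.2) / 2) (P x) :=
  ((hh.integrable_comp measurable_fst).add (hh.integrable_comp measurable_snd)).div_const 2

lemma MeasurableBoundedBy.qop {C : ℝ} {h : S → ℝ} (hh : MeasurableBoundedBy C h) :
    MeasurableBoundedBy C (Qop P h) := by
  refine ⟨measurable_qop P hh.1, fun x => ?_⟩
  have hpair : ∀ q : S × S, ‖(h q.1 + h q.2) / 2‖ ≤ C := fun q => by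
    rw [Real.norm_eq_abs, abs_div, abs_two, div_le_iff₀ two_pos]
    linarith [abs_add_le (h q.1) (h q.2), hh.2 q.1, hh.2 q.2]
  simpa [Qop] using norm_integral_le_of_norm_le_const (μ := P x) (ae_of_all _ hpair)

lemma MeasurableBoundedBy.qiter {C : ℝ} {h : S → ℝ} (hh : MeasurableBoundedBy C h) (k : ℕ) :
    MeasurableBoundedBy C (Qiter P k h) := by
  induction k with
  | zero => exact hh
  | succ k ih => rw [qiter_succ']; exact ih.qop P

lemma qiter_le_qiter_of_le (hF : AssumpF P ν F) {u v : S → ℝ} {C : ℝ} (hu : MeasurableBoundedBy C u)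
    (hv : v ∈ F) (huv : u ≤ v) (k : ℕ) : Qiter P k u ≤ Qiter P k v := by
  induction k with
  | zero => exact huv
  | succ k ih =>
    intro x
    rw [qiter_succ', qiter_succ']
    exact qop_mono P ((hu.qiter P k).integrable_pair P x)
      (hF.integrable_pair P (hF.qiter_mem P hv k) x) ih

end Qop

lemma qiter_nonneg (P : Kernel S (S × S)) {φ : S → ℝ} (hφ : 0 ≤ φ) (k : ℕ) :
    0 ≤ Qiter P k φ := by
  induction k with
  | zero => exact hφ
  | succ k ih =>
    intro x
    rw [qiter_succ']
    exact integral_nonneg fun q => div_nonneg (add_nonneg (ih q.1) (ih q.2)) zero_le_two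

section ManyToOne

variable {P : Kernel S (S × S)} [IsMarkovKernel P] {ν : Measure S}
  {m : Measure Ω} [IsFiniteMeasure m] {X : List Bool → Ω → S}

/-- The branching property, applied to the function equal to `h(y) + h(z)` at `i₀` and to `1`
elsewhere. -/
lemma IsBMC.integral_children (hBMC : IsBMC P ν m X) {k : ℕ} {i₀ : List Bool}
    (hi₀ : i₀ ∈ gen k) {C : ℝ} {h : S → ℝ} (hh : MeasurableBoundedBy C h) :
    ∫ ω, (h (X (i₀ ++ [false]) ω) + h (X (i₀ ++ [true]) ω)) ∂m
      = ∫ ω, 2 * Qop P h (X i₀ ω) ∂m := by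
  classical
  set G : List Bool → S → S × S → ℝ := fun i _ q => if i = i₀ then h q.1 + h q.2 else 1
  have hG_meas : ∀ i, Measurable fun q : S × S × S => G i q.1 q.2 := fun i => by
    by_cases hi : i = i₀
    · simp only [G, if_pos hi]
      exact (hh.1.comp (measurable_fst.comp measurable_snd)).add
        (hh.1.comp (measurable_snd.comp measurable_snd))
    · simp only [G, if_neg hi, measurable_const]
  have hG_bdd : ∀ i, ∃ C', ∀ x q, |G i x q| ≤ C' := fun i => ⟨max (2 * C) 1, fun x q => by
    by_cases hi : i = i₀
    · simp only [G, if_pos hi]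
      linarith [abs_add_le (h q.1) (h q.2), hh.2 q.1, hh.2 q.2, le_max_left (2 * C) 1]
    · simp [G, hi]⟩
  have hG_int : ∀ i x, ∫ q, G i x q ∂(P x) = if i = i₀ then 2 * Qop P h x else 1 := by
    intro i x
    by_cases hi : i = i₀
    · simp only [G, if_pos hi, Qop, ← integral_const_mul]
      congr 1 with q
      ring
    · simp [G, hi]
  have hle : sigmaTree X k ≤ ‹MeasurableSpace Ω› := iSup₂_le fun j _ => (hBMC.meas j).comap_le
  calc ∫ ω, (h (X (i₀ ++ [false]) ω) + h (X (i₀ ++ [true]) ω)) ∂m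
      = ∫ ω, ∏ i ∈ gen k, G i (X i ω) (X (i ++ [false]) ω, X (i ++ [true]) ω) ∂m := by
        simp [G, prod_ite_eq', hi₀]
    _ = ∫ ω, ∏ i ∈ gen k, ∫ q, G i (X i ω) q ∂(P (X i ω)) ∂m :=
        (integral_condExp hle).symm.trans (integral_congr_ae (hBMC.branching k G hG_meas hG_bdd))
    _ = ∫ ω, 2 * Qop P h (X i₀ ω) ∂m := by
        simp [hG_int, prod_ite_eq', hi₀]

lemma IsBMC.integral_sum_gen (hBMC : IsBMC P ν m X) {C : ℝ} {h : S → ℝ}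
    (hh : MeasurableBoundedBy C h) (k : ℕ) :
    ∫ ω, ∑ i ∈ gen k, h (X i ω) ∂m = 2 ^ k * ∫ x, Qiter P k h x ∂ν := by
  induction k generalizing h with
  | zero =>
    simp only [gen_zero, sum_singleton, pow_zero, one_mul, Qiter, Function.iterate_zero, id]
    rw [← hBMC.init, integral_map (hBMC.meas []).aemeasurable hh.1.aestronglyMeasurable]
  | succ k ih =>
    have hint := fun i => hh.integrable_comp (m := m) (hBMC.meas i)
    have hQint := fun i => (hh.qop P).integrable_comp (m := m) (hBMC.meas i)
    calc ∫ ω, ∑ i ∈ gen (k + 1), h (X i ω) ∂m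
        = ∑ i ∈ gen k, ∫ ω, (h (X (i ++ [false]) ω) + h (X (i ++ [true]) ω)) ∂m := by
          simp_rw [sum_gen_succ]
          exact integral_finsetSum _ fun i _ => (hint _).add (hint _)
      _ = ∑ i ∈ gen k, ∫ ω, 2 * Qop P h (X i ω) ∂m :=
          sum_congr rfl fun i hi => hBMC.integral_children hi hh
      _ = 2 * ∫ ω, ∑ i ∈ gen k, Qop P h (X i ω) ∂m := by
          rw [integral_finsetSum _ fun i _ => hQint i, mul_sum]
          simp_rw [integral_const_mul]
      _ = 2 ^ (k + 1) * ∫ x, Qiter P (k + 1) h x ∂ν := by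
          rw [ih (hh.qop P), qiter_succ]
          ring

variable [IsFiniteMeasure ν] {F : Set (S → ℝ)}

lemma IsBMC.lintegral_sum_gen_le (hBMC : IsBMC P ν m X) (hF : AssumpF P ν F) {φ : S → ℝ}
    (hφ : φ ∈ F) (hφ0 : 0 ≤ φ) (k : ℕ) :
    ∫⁻ ω, ENNReal.ofReal (∑ i ∈ gen k, φ (X i ω)) ∂m
      ≤ ENNReal.ofReal (2 ^ k * ∫ x, Qiter P k φ x ∂ν) := by
  set φ_ : ℕ → S → ℝ := fun M x => min (φ x) M
  have hbdd : ∀ M : ℕ, MeasurableBoundedBy M (φ_ M) := fun M =>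
    ⟨(hF.meas φ hφ).min measurable_const, fun x => by
      rw [abs_of_nonneg (le_min (hφ0 x) M.cast_nonneg)]; exact min_le_right _ _⟩
  have hmeas : ∀ M, Measurable fun ω => ENNReal.ofReal (∑ i ∈ gen k, φ_ M (X i ω)) := fun M =>
    (Finset.measurable_sum _ fun i _ => (hbdd M).1.comp (hBMC.meas i)).ennreal_ofReal
  have hmono : ∀ ω, Monotone fun M : ℕ => ENNReal.ofReal (∑ i ∈ gen k, φ_ M (X i ω)) :=
    fun ω M M' hM => ENNReal.ofReal_le_ofReal <|
      sum_le_sum fun i _ => min_le_min le_rfl (Nat.cast_le.2 hM)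
  have hlim : ∀ ω, Tendsto (fun M : ℕ => ENNReal.ofReal (∑ i ∈ gen k, φ_ M (X i ω))) atTop
      (𝓝 (ENNReal.ofReal (∑ i ∈ gen k, φ (X i ω)))) := fun ω =>
    ENNReal.tendsto_ofReal <| tendsto_finsetSum _ fun i _ =>
      tendsto_atTop_of_eventually_const (i₀ := ⌈φ (X i ω)⌉₊) fun M hM =>
        min_eq_left ((Nat.le_ceil _).trans (Nat.cast_le.2 hM))
  refine le_of_tendsto (lintegral_tendsto_of_tendsto_of_monotone (fun M => (hmeas M).aemeasurable)
    (ae_of_all _ hmono) (ae_of_all _ hlim)) (Eventually.of_forall fun M => ?_)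
  rw [← ofReal_integral_eq_lintegral_ofReal
      (integrable_finsetSum _ fun i _ => (hbdd M).integrable_comp (hBMC.meas i))
      (ae_of_all _ fun ω => sum_nonneg fun i _ => le_min (hφ0 _) M.cast_nonneg),
    hBMC.integral_sum_gen (hbdd M) k]
  refine ENNReal.ofReal_le_ofReal (mul_le_mul_of_nonneg_left ?_ (by positivity))
  exact integral_mono (((hbdd M).qiter P k).integrable_comp measurable_id)
    (hF.int_nu _ (hF.qiter_mem P hφ k))
    (qiter_le_qiter_of_le P hF (hbdd M) hφ (fun x => min_le_left _ _) k)

lemma IsBMC.integrable_sum_gen (hBMC : IsBMC P ν m X) (hF : AssumpF P ν F) {φ : S → ℝ}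
    (hφ : φ ∈ F) (hφ0 : 0 ≤ φ) (k : ℕ) : Integrable (fun ω => ∑ i ∈ gen k, φ (X i ω)) m :=
  ⟨(Finset.measurable_sum _ fun i _ => (hF.meas φ hφ).comp (hBMC.meas i)).aestronglyMeasurable,
    (hasFiniteIntegral_iff_ofReal (ae_of_all _ fun _ => sum_nonneg fun _ _ => hφ0 _)).2
      ((hBMC.lintegral_sum_gen_le hF hφ hφ0 k).trans_lt ENNReal.ofReal_lt_top)⟩

lemma IsBMC.integral_sum_gen_le (hBMC : IsBMC P ν m X) (hF : AssumpF P ν F) {φ : S → ℝ}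
    (hφ : φ ∈ F) (hφ0 : 0 ≤ φ) (k : ℕ) :
    ∫ ω, ∑ i ∈ gen k, φ (X i ω) ∂m ≤ 2 ^ k * ∫ x, Qiter P k φ x ∂ν := by
  rw [integral_eq_lintegral_of_nonneg_ae (ae_of_all _ fun _ => sum_nonneg fun _ _ => hφ0 _)
    (hBMC.integrable_sum_gen hF hφ hφ0 k).aestronglyMeasurable]
  exact ENNReal.toReal_le_of_le_ofReal
    (mul_nonneg (by positivity) (integral_nonneg (qiter_nonneg P hφ0 k)))
    (hBMC.lintegral_sum_gen_le hF hφ hφ0 k)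

end ManyToOne

/-- Lagrange interpolation at the distinct nodes `θ j`. -/
lemma exists_eq_sum_smul_sum_pow_smul {K : Type*} [Field K] {J : Type*} [Fintype J]
    [DecidableEq J] {θ : J → K} (hθ : Function.Injective θ) {E : Type*} [AddCommGroup E]
    [Module K E] (v : J → E) (j : J) :
    ∃ c : ℕ → K, v j = ∑ t ∈ range (Fintype.card J), c t • ∑ j', θ j' ^ t • v j' := by
  set pol := Lagrange.basis univ θ j
  have hinj : Set.InjOn θ (univ : Finset J) := hθ.injOn
  have hdeg : pol.natDegree < Fintype.card J := by
    have := Fintype.card_pos_iff.2 ⟨j⟩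
    rw [Lagrange.natDegree_basis hinj (mem_univ j), card_univ]
    omega
  refine ⟨pol.coeff, ?_⟩
  calc v j = ∑ j', pol.eval (θ j') • v j' := by
        rw [sum_eq_single j (fun j' _ hj' => by
          rw [Lagrange.eval_basis_of_ne hj'.symm (mem_univ _), zero_smul]) (by simp),
          Lagrange.eval_basis_self hinj (mem_univ j), one_smul]
    _ = _ := by
        simp_rw [Polynomial.eval_eq_sum_range' hdeg, sum_smul, smul_sum, mul_smul]
        exact sum_comm

def HasIntegrableMajorant (ν : Measure S) (u : S → ℂ) : Prop :=
  ∃ h : S → ℝ, Integrable h ν ∧ ∀ x, ‖u x‖ ≤ h x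

lemma hasIntegrableMajorant_sum_smul {ν : Measure S} {ι : Type*} {u : ι → S → ℂ}
    (hu : ∀ t, HasIntegrableMajorant ν (u t)) (s : Finset ι) (c : ι → ℂ) :
    HasIntegrableMajorant ν (∑ t ∈ s, c t • u t) := by
  choose h hint hle using hu
  refine ⟨fun x => ∑ t ∈ s, ‖c t‖ * h t x,
    integrable_finsetSum _ fun t _ => (hint t).const_mul _, fun x => ?_⟩
  simp only [Finset.sum_apply, Pi.smul_apply, smul_eq_mul]
  exact (norm_sum_le _ _).trans <| sum_le_sum fun t _ => by
    rw [norm_mul]; exact mul_le_mul_of_nonneg_left (hle t x) (norm_nonneg _)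

section SpectralGap

variable {P : Kernel S (S × S)} {ν : Measure S} [IsFiniteMeasure ν] {F : Set (S → ℝ)}
  {μ : Measure S} {α : ℝ} {J : Type*} [Fintype J] [DecidableEq J] {αj : J → ℂ}
  {R : J → (S → ℂ) → S → ℂ} {β : ℕ → ℝ}

/-- By (H3), `αᵗ ‖∑ j, θ_jᵗ ℛ_j φ‖ ≤ |𝒬ᵗ φ - ⟨μ, φ⟩| + β_t αᵗ g`. -/
lemma AssumpH3.hasIntegrableMajorant_oscillating (hH3 : AssumpH3 P F μ α αj R β)
    (hF : AssumpF P ν F) (hα : 0 < α) {φ : S → ℝ} (hφ : φ ∈ F) (t : ℕ) :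
    HasIntegrableMajorant ν (∑ j, (αj j / (α : ℂ)) ^ t • R j (cf φ)) := by
  obtain ⟨g, hg, herg⟩ := hH3.erg φ hφ
  refine ⟨fun x => (α ^ t)⁻¹ * |Qiter P t φ x - mInt μ φ| + β t * g x,
    ((((hF.int_nu _ (hF.qiter_mem P hφ t)).sub (integrable_const _)).abs).const_mul _).add
      ((hF.int_nu g hg).const_mul _), fun x => ?_⟩
  have hαt : 0 < α ^ t := pow_pos hα t
  have herr := herg t x
  simp only [qiterC_cf, cf] at herr
  simp only [Finset.sum_apply, Pi.smul_apply, smul_eq_mul]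
  set osc := ∑ j, (αj j / (α : ℂ)) ^ t * R j (cf φ) x
  have hosc : α ^ t * ‖osc‖ ≤ |Qiter P t φ x - mInt μ φ| + β t * α ^ t * g x := by
    have htri := norm_le_norm_add_norm_sub' ((α : ℂ) ^ t * osc)
      ((Qiter P t φ x : ℂ) - (mInt μ φ : ℂ))
    rw [norm_sub_rev ((α : ℂ) ^ t * osc), norm_mul, norm_pow, Complex.norm_real, Real.norm_of_nonneg hα.le,
      ← Complex.ofReal_sub, Complex.norm_real, Real.norm_eq_abs, Complex.ofReal_sub] at htri
    linarith
  calc ‖osc‖ = (α ^ t)⁻¹ * (α ^ t * ‖osc‖) := by field_simp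
    _ ≤ (α ^ t)⁻¹ * (|Qiter P t φ x - mInt μ φ| + β t * α ^ t * g x) := by gcongr
    _ = _ := by field_simp

lemma AssumpH3.hasIntegrableMajorant_proj (hH3 : AssumpH3 P F μ α αj R β)
    (hF : AssumpF P ν F) (hα : 0 < α) {φ : S → ℝ} (hφ : φ ∈ F) (j : J) :
    HasIntegrableMajorant ν (R j (cf φ)) := by
  have hθ : Function.Injective fun j => αj j / (α : ℂ) := fun a b hab =>
    hH3.inj ((div_left_inj' (Complex.ofReal_ne_zero.2 hα.ne')).1 hab)
  obtain ⟨c, hc⟩ := exists_eq_sum_smul_sum_pow_smul hθ (fun j => R j (cf φ)) j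
  rw [hc]
  exact hasIntegrableMajorant_sum_smul (hH3.hasIntegrableMajorant_oscillating hF hα hφ) _ c

lemma AssumpH3.exists_integral_qiter_le (hH3 : AssumpH3 P F μ α αj R β) (hF : AssumpF P ν F)
    (hα₀ : 0 < α) (hα₁ : α ≤ 1) {φ : S → ℝ} (hφ : φ ∈ F) :
    ∃ B, ∀ k, ∫ x, Qiter P k φ x ∂ν ≤ B := by
  obtain ⟨g, hg, herg⟩ := hH3.erg φ hφ
  choose h hint hle using hH3.hasIntegrableMajorant_proj hF hα₀ hφ
  refine ⟨∫ x, mInt μ φ + ∑ j, h j x + |g x| ∂ν, fun k => integral_mono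
    (hF.int_nu _ (hF.qiter_mem P hφ k))
    (((integrable_const _).add (integrable_finsetSum _ fun j _ => hint j)).add
      (hF.int_nu g hg).abs) fun x => ?_⟩
  have hαk : α ^ k ≤ 1 := pow_le_one₀ hα₀.le hα₁
  have herr := herg k x
  simp only [qiterC_cf, cf] at herr
  set osc := ∑ j, (αj j / (α : ℂ)) ^ k * R j (cf φ) x
  have hosc : ‖(α : ℂ) ^ k * osc‖ ≤ ∑ j, h j x := by
    rw [norm_mul, norm_pow, Complex.norm_real, Real.norm_of_nonneg hα₀.le]
    refine (mul_le_of_le_one_left (norm_nonneg _) hαk).trans <|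
      (norm_sum_le _ _).trans (sum_le_sum fun j _ => ?_)
    rw [norm_mul, norm_pow, norm_div, hH3.abs_eq, Complex.norm_real,
      Real.norm_of_nonneg hα₀.le, div_self hα₀.ne', one_pow, one_mul]
    exact hle j x
  have hβ : β k * α ^ k * g x ≤ |g x| :=
    (le_abs_self _).trans <| by
      rw [abs_mul, abs_of_nonneg (mul_nonneg (hH3.βpos k).le (pow_nonneg hα₀.le k))]
      exact mul_le_of_le_one_left (abs_nonneg _)
        (mul_le_one₀ (hH3.βle k) (pow_nonneg hα₀.le k) hαk)
  have hdev : Qiter P k φ x - mInt μ φ ≤ ‖((Qiter P k φ x : ℂ) - (mInt μ φ : ℂ))‖ := by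
    rw [← Complex.ofReal_sub, Complex.norm_real, Real.norm_eq_abs]
    exact le_abs_self _
  have htri := norm_le_norm_add_norm_sub' ((Qiter P k φ x : ℂ) - (mInt μ φ : ℂ))
    ((α : ℂ) ^ k * osc)
  linarith

end SpectralGap

lemma sq_sum_sum_le {ι κ : Type*} (s : Finset ι) (t : ι → Finset κ) (a : ι → κ → ℝ) :
    (∑ k ∈ s, ∑ i ∈ t k, a k i) ^ 2 ≤ #s * ∑ k ∈ s, #(t k) * ∑ i ∈ t k, a k i ^ 2 :=
  sq_sum_le_card_mul_sum_sq.trans <| mul_le_mul_of_nonneg_left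
    (sum_le_sum fun _ _ => sq_sum_le_card_mul_sum_sq) (Nat.cast_nonneg _)

lemma IsBMC.integral_sq_sum_gen_le {P : Kernel S (S × S)} [IsMarkovKernel P] {ν : Measure S}
    [IsFiniteMeasure ν] {m : Measure Ω} [IsFiniteMeasure m] {X : List Bool → Ω → S}
    (hBMC : IsBMC P ν m X) {F : Set (S → ℝ)} (hF : AssumpF P ν F) {g : S → ℝ} (hg : g ∈ F)
    {f : ℕ → S → ℝ} (hf : ∀ k x, |f k x| ≤ g x) {B : ℝ}
    (hB : ∀ k, ∫ x, Qiter P k (fun x => g x ^ 2) x ∂ν ≤ B) (q : ℕ) :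
    ∫ ω, (∑ k ∈ range q, ∑ i ∈ gen k, f k (X i ω)) ^ 2 ∂m ≤ q ^ 2 * 4 ^ q * B := by
  have hφ := hF.sq_mem g hg
  have hφ0 : 0 ≤ fun x => g x ^ 2 := fun x => sq_nonneg (g x)
  have hB0 : 0 ≤ B := (integral_nonneg hφ0).trans (hB 0)
  have hW := hBMC.integrable_sum_gen hF hφ hφ0
  calc ∫ ω, (∑ k ∈ range q, ∑ i ∈ gen k, f k (X i ω)) ^ 2 ∂m
      ≤ ∫ ω, (q : ℝ) * ∑ k ∈ range q, (2 : ℝ) ^ k * ∑ i ∈ gen k, g (X i ω) ^ 2 ∂m := by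
        refine integral_mono_of_nonneg (ae_of_all _ fun _ => sq_nonneg _)
          ((integrable_finsetSum _ fun k _ => (hW k).const_mul _).const_mul _)
          (ae_of_all _ fun ω => (sq_sum_sum_le _ _ _).trans ?_)
        simp only [card_range, card_gen, Nat.cast_pow, Nat.cast_ofNat]
        refine mul_le_mul_of_nonneg_left (sum_le_sum fun k _ => mul_le_mul_of_nonneg_left
          (sum_le_sum fun i _ => ?_) (by positivity)) (by positivity)
        exact (sq_abs _).symm.le.trans (pow_le_pow_left₀ (abs_nonneg _) (hf k _) 2)
    _ = q * ∑ k ∈ range q, 2 ^ k * ∫ ω, ∑ i ∈ gen k, g (X i ω) ^ 2 ∂m := by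
        rw [integral_const_mul, integral_finsetSum _ fun k _ => (hW k).const_mul _]
        simp_rw [integral_const_mul]
    _ ≤ q * ∑ _k ∈ range q, 4 ^ q * B := by
        refine mul_le_mul_of_nonneg_left (sum_le_sum fun k hk => ?_) (Nat.cast_nonneg _)
        calc 2 ^ k * ∫ ω, ∑ i ∈ gen k, g (X i ω) ^ 2 ∂m ≤ 2 ^ k * (2 ^ k * B) := by
              gcongr
              exact (hBMC.integral_sum_gen_le hF hφ hφ0 k).trans (by gcongr; exact hB k)
          _ = 4 ^ k * B := by rw [← mul_assoc, ← mul_pow]; norm_num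
          _ ≤ 4 ^ q * B :=
              mul_le_mul_of_nonneg_right (pow_le_pow_right₀ (by norm_num) (mem_range.1 hk).le) hB0
    _ = q ^ 2 * 4 ^ q * B := by rw [sum_const, card_range, nsmul_eq_mul]; ring

lemma tendsto_inv_mul_sq_mul_four_pow_div_two_pow {p : ℕ → ℕ}
    (hp : Tendsto (fun n => (p n : ℝ) / n) atTop (𝓝 1)) :
    Tendsto (fun n : ℕ => (n : ℝ)⁻¹ * ((n - p n : ℕ) ^ 2 * 4 ^ (n - p n) / 2 ^ n))
      atTop (𝓝 0) := by
  have hev : ∀ᶠ n : ℕ in atTop, 4 * (n - p n) ≤ n := by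
    filter_upwards [hp.eventually (eventually_ge_nhds (by norm_num : (3 / 4 : ℝ) < 1)),
      eventually_gt_atTop 0] with n hn hn0
    rw [le_div_iff₀ (by exact_mod_cast hn0)] at hn
    have : 3 * n ≤ 4 * p n := by exact_mod_cast (by linarith : (3 * n : ℝ) ≤ 4 * p n)
    omega
  refine squeeze_zero' (Eventually.of_forall fun n => by positivity) ?_
    (by simpa using tendsto_pow_const_div_const_pow_of_one_lt 1 Real.one_lt_sqrt_two)
  filter_upwards [hev] with n hn
  have h4 : (4 : ℝ) ^ (n - p n) ≤ √2 ^ n := by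
    have h4 : (4 : ℝ) = √2 ^ 4 := by
      rw [show 4 = 2 * 2 from rfl, pow_mul, Real.sq_sqrt zero_le_two]
      norm_num
    rw [h4, ← pow_mul]
    exact pow_le_pow_right₀ Real.one_lt_sqrt_two.le (by omega)
  have h2 : (2 : ℝ) ^ n = √2 ^ n * √2 ^ n := by rw [← mul_pow, Real.mul_self_sqrt zero_le_two]
  have hq : ((n - p n : ℕ) : ℝ) ^ 2 ≤ (n : ℝ) ^ 2 := by gcongr; exact n.sub_le _
  calc (n : ℝ)⁻¹ * ((n - p n : ℕ) ^ 2 * 4 ^ (n - p n) / 2 ^ n)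
      ≤ (n : ℝ)⁻¹ * (n ^ 2 * √2 ^ n / (√2 ^ n * √2 ^ n)) := by rw [← h2]; gcongr
    _ = n / √2 ^ n := by
        rcases n.eq_zero_or_pos with rfl | hn0
        · simp
        · field_simp

theorem critical_R0_general
    {S : Type*} [MeasurableSpace S] {Ω : Type*} [MeasurableSpace Ω]
    (P : Kernel S (S × S)) [IsMarkovKernel P]
    (ν : Measure S) [IsProbabilityMeasure ν]
    (m : Measure Ω) [IsProbabilityMeasure m]
    (X : List Bool → Ω → S) (hBMC : IsBMC P ν m X)
    (F : Set (S → ℝ)) (hF : AssumpF P ν F)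
    (μ : Measure S) (α : ℝ) (hα : α = (Real.sqrt 2)⁻¹)
    {J : Type*} [Fintype J] [DecidableEq J]
    (αj : J → ℂ) (R : J → (S → ℂ) → S → ℂ) (β : ℕ → ℝ)
    (hH3 : AssumpH3 P F μ α αj R β)
    (𝔣 : ℕ → S → ℝ)
    (g : S → ℝ) (hg : g ∈ F) (hunif : UnifH3 P μ α R β 𝔣 g)
    (p : ℕ → ℕ)
    (hp_ratio : Tendsto (fun n => (p n : ℝ) / n) atTop (𝓝 1)) :
    Tendsto (fun n : ℕ => (n : ℝ)⁻¹ * ∫ ω,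
        ((Real.sqrt (2 ^ n))⁻¹ *
          ∑ k ∈ Finset.range (n - p n), MA X (gen k) (ctr μ (𝔣 (n - k))) ω) ^ 2 ∂m)
      atTop (𝓝 0) := by
  have hα₀ : 0 < α := by rw [hα]; positivity
  have hα₁ : α ≤ 1 := by rw [hα]; exact inv_le_one_of_one_le₀ Real.one_lt_sqrt_two.le
  obtain ⟨B, hB⟩ := hH3.exists_integral_qiter_le hF hα₀ hα₁ (hF.sq_mem g hg)
  have hctr : ∀ ℓ x, |ctr μ (𝔣 ℓ) x| ≤ g x := fun ℓ x => by
    simpa [QiterC, cf] using (hunif 0 ℓ x).2.1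
  refine squeeze_zero (fun n => by positivity) (fun n => ?_)
    (by simpa using (tendsto_inv_mul_sq_mul_four_pow_div_two_pow hp_ratio).const_mul B)
  have hsq : ∀ y : ℝ, ((Real.sqrt (2 ^ n))⁻¹ * y) ^ 2 = ((2 : ℝ) ^ n)⁻¹ * y ^ 2 := fun y => by
    rw [mul_pow, inv_pow, Real.sq_sqrt (by positivity)]
  simp only [MA, hsq, integral_const_mul]
  calc (n : ℝ)⁻¹ * ((2 ^ n)⁻¹ *
        ∫ ω, (∑ k ∈ range (n - p n), ∑ i ∈ gen k, ctr μ (𝔣 (n - k)) (X i ω)) ^ 2 ∂m)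
      ≤ (n : ℝ)⁻¹ * ((2 ^ n)⁻¹ * ((n - p n : ℕ) ^ 2 * 4 ^ (n - p n) * B)) := by
        gcongr
        exact hBMC.integral_sq_sum_gen_le hF hg (fun k => hctr (n - k)) hB _
    _ = B * ((n : ℝ)⁻¹ * ((n - p n : ℕ) ^ 2 * 4 ^ (n - p n) / 2 ^ n)) := by ring

/-- **Lemma (critical: the remainder `R₀` vanishes at speed `n⁻¹` in `L²`).** -/
theorem critical_R0
    {S : Type*} [MeasurableSpace S] {Ω : Type*} [MeasurableSpace Ω]
    (P : Kernel S (S × S)) [IsMarkovKernel P]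
    (ν : Measure S) [IsProbabilityMeasure ν]
    (m : Measure Ω) [IsProbabilityMeasure m]
    (X : List Bool → Ω → S) (hBMC : IsBMC P ν m X)
    (F : Set (S → ℝ)) (hF : AssumpF P ν F)
    (μ : Measure S) (α : ℝ) (hα : α = (Real.sqrt 2)⁻¹)
    {J : Type*} [Fintype J] [DecidableEq J]
    (αj : J → ℂ) (R : J → (S → ℂ) → S → ℂ) (β : ℕ → ℝ)
    (hH3 : AssumpH3 P F μ α αj R β)
    (𝔣 : ℕ → S → ℝ) (h𝔣 : ∀ ℓ, 𝔣 ℓ ∈ F)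
    (g : S → ℝ) (hg : g ∈ F) (hunif : UnifH3 P μ α R β 𝔣 g)
    (p : ℕ → ℕ) (hp_mono : Monotone p) (hp_pos : ∀ n, 1 ≤ p n)
    (hp_lt : ∀ᶠ n in atTop, p n < n)
    (hp_ratio : Tendsto (fun n => (p n : ℝ) / n) atTop (𝓝 1))
    (hp_log : ∀ lam : ℝ, 0 < lam →
      Tendsto (fun n : ℕ => (n : ℝ) - p n - lam * Real.log n) atTop atTop) :
    Tendsto (fun n : ℕ => (n : ℝ)⁻¹ * ∫ ω,
        ((Real.sqrt (2 ^ n))⁻¹ *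
          ∑ k ∈ Finset.range (n - p n), MA X (gen k) (ctr μ (𝔣 (n - k))) ω) ^ 2 ∂m)
      atTop (𝓝 0) :=
  critical_R0_general P ν m X hBMC F hF μ α hα αj R β hH3 𝔣 g hg hunif p hp_ratio

end BMC
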